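/- arXiv:1403.5215 — 3 statements merged into one kernel-verified Lean document; each statement's English description precedes it below -/
import Mathlib

section
/- Let A and B be finitely generated free ℤ-modules, σ : A → A a ℤ-linear involution, and π : A → B, ℓ : B → A ℤ-linear maps satisfying π ∘ ℓ = 2·id_B and ℓ ∘ π = id_A + σ. Then the rank of the kernel of id_A + σ equals rank A − rank B; that is, finrank_ℤ (ker(id_A + σ)) = finrank_ℤ A − finrank_ℤ B. -/
/-- Any two `ℤ`-module structures on an additive commutative group coincide. -/
private lemma int_module_subsingleton {M : Type*} [AddCommGroup M] (i j : Module ℤ M) :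
    i = j :=
  (AddCommGroup.uniqueIntModule.uniq i).trans (AddCommGroup.uniqueIntModule.uniq j).symm

/-- `finrank` over `ℤ` does not depend on the choice of `ℤ`-module structure. -/
private lemma finrank_int_congr {M : Type*} [AddCommGroup M] (i j : Module ℤ M) :
    @Module.finrank ℤ M _ _ i = @Module.finrank ℤ M _ _ j := by
  rw [int_module_subsingleton i j]

/-- For finitely generated free ℤ-modules `A`, `B`, a ℤ-linear involution
`σ : A → A`, and ℤ-linear maps `π : A → B`, `ℓ : B → A` with `π ∘ ℓ = 2·id` and
`ℓ ∘ π = id + σ`, the rank of `ker (id + σ)` equals `rank A - rank B`. -/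
theorem stmt_8 {A B : Type*} [AddCommGroup A] [AddCommGroup B]
    [Module ℤ A] [Module ℤ B]
    [Module.Free ℤ A] [Module.Finite ℤ A]
    [Module.Free ℤ B] [Module.Finite ℤ B]
    (σ : A →ₗ[ℤ] A) (hσ : ∀ a, σ (σ a) = a)
    (π : A →ₗ[ℤ] B) (ℓ : B →ₗ[ℤ] A)
    (hπℓ : ∀ b : B, π (ℓ b) = (2 : ℤ) • b)
    (hℓπ : ∀ a : A, ℓ (π a) = a + σ a) :
    Module.finrank ℤ (LinearMap.ker ((LinearMap.id : A →ₗ[ℤ] A) + σ)) =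
      Module.finrank ℤ A - Module.finrank ℤ B := by
  set f : A →ₗ[ℤ] A := (LinearMap.id : A →ₗ[ℤ] A) + σ with hf
  have hfcomp : f = ℓ.comp π := by
    ext a
    simp [hf, hℓπ a]
  -- ℓ is injective
  have hℓinj : Function.Injective ℓ := by
    intro b₁ b₂ h
    have h2 := congrArg π h
    rw [hπℓ, hπℓ, ← Int.cast_smul_eq_zsmul ℤ (2 : ℤ) b₁,
      ← Int.cast_smul_eq_zsmul ℤ (2 : ℤ) b₂] at h2
    exact smul_right_injective B (by simp : (((2 : ℤ) : ℤ)) ≠ 0) h2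
  -- g = π ∘ ℓ is injective
  set g : B →ₗ[ℤ] B := π.comp ℓ with hg
  letI : Module ℤ (LinearMap.range π) := (LinearMap.range π).module
  letI : Module ℤ (LinearMap.range g) := (LinearMap.range g).module
  letI : Module ℤ (LinearMap.ker f) := (LinearMap.ker f).module
  letI : Module ℤ (A ⧸ LinearMap.ker f) := Submodule.Quotient.module _
  letI : Module ℤ (LinearMap.range f) := (LinearMap.range f).module
  letI : Module ℤ ((LinearMap.range π).map ℓ) := ((LinearMap.range π).map ℓ).module
  have hginj : Function.Injective g := by
    intro b₁ b₂ h
    have h2 : π (ℓ b₁) = π (ℓ b₂) := h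
    rw [hπℓ, hπℓ, ← Int.cast_smul_eq_zsmul ℤ (2 : ℤ) b₁,
      ← Int.cast_smul_eq_zsmul ℤ (2 : ℤ) b₂] at h2
    exact smul_right_injective B (by simp : (((2 : ℤ) : ℤ)) ≠ 0) h2
  have hrange : LinearMap.range f = (LinearMap.range π).map ℓ := by
    rw [hfcomp, LinearMap.range_comp]
  -- finrank (range π) = finrank B
  have hle1 := Submodule.finrank_le (R := ℤ) (LinearMap.range π)
  have heq2 := (LinearEquiv.ofInjective g hginj).finrank_eq
  have hle3 := Submodule.finrank_mono (R := ℤ)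
    (show LinearMap.range g ≤ LinearMap.range π from by
      rw [hg]; exact LinearMap.range_comp_le_range ℓ π)
  have hrankπ := le_antisymm hle1 (heq2.symm ▸ hle3 : Module.finrank ℤ B ≤ _)
  -- rank-nullity for f
  have hrn := Submodule.finrank_quotient_add_finrank (R := ℤ) (LinearMap.ker f)
  have hquot := f.quotKerEquivRange.finrank_eq
  have heq4 := ((LinearMap.range π).equivMapOfInjective ℓ hℓinj).finrank_eq
  rw [hquot, hrange, ← heq4, hrankπ] at hrn
  -- bridge the `Module ℤ` instance diamond on the kernel and conclude
  have hgoal : @Module.finrank ℤ (LinearMap.ker f) _ _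
        (AddCommGroup.toIntModule _)
      = @Module.finrank ℤ (LinearMap.ker f) _ _ (LinearMap.ker f).module :=
    finrank_int_congr _ _
  rw [show (Module.finrank ℤ A - Module.finrank ℤ B)
      = Module.finrank ℤ (LinearMap.ker f) from by omega, ← hgoal]
end

section
/- Let L be a finitely generated free ℤ-module with a biadditive alternating unimodular form ⟨·,·⟩ : L × L → ℤ (i.e. x ↦ ⟨x,·⟩ is a bijection from L onto Hom_ℤ(L,ℤ)), and let σ : L → L be a ℤ-linear involution preserving the form. Then for every ℤ-linear functional φ : ker(id + σ) → ℤ there exists x ∈ ker(id + σ) such that ⟨x, y⟩ = 2·φ(y) for all y ∈ ker(id + σ). (Equivalently, the inverse of the Gram matrix of the form on the odd sublattice has entries in (1/2)ℤ.) -/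
private lemma aux_retraction {R M : Type*} [CommRing R] [IsDomain R] [IsPrincipalIdealRing R]
    [AddCommGroup M] [Module R M] [Module.Free R M] [Module.Finite R M]
    (f : M →ₗ[R] M) :
    ∃ r : M →ₗ[R] LinearMap.ker f, ∀ y : LinearMap.ker f, r (y : M) = y := by
  set K := LinearMap.ker f with hK
  have e := f.quotKerEquivRange
  have : Module.Free R (M ⧸ K) := Module.Free.of_equiv e.symm
  obtain ⟨s, hs⟩ := Module.projective_lifting_property K.mkQ (LinearMap.id) K.mkQ_surjective
  have hmem : ∀ x : M, x - s (K.mkQ x) ∈ K := by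
    intro x
    have h2 := LinearMap.congr_fun hs (K.mkQ x)
    simp only [LinearMap.comp_apply, LinearMap.id_apply] at h2
    have h1 : K.mkQ (x - s (K.mkQ x)) = 0 := by
      rw [map_sub, h2, sub_self]
    exact (Submodule.Quotient.mk_eq_zero K).mp h1
  refine ⟨LinearMap.codRestrict K (LinearMap.id - s.comp K.mkQ) (fun x => hmem x), fun y => ?_⟩
  apply Subtype.ext
  have hy : K.mkQ (y : M) = 0 := (Submodule.Quotient.mk_eq_zero K).mpr y.2
  simp [hy]

/-- For a finitely generated free ℤ-module `L` with an alternating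
unimodular bilinear form `B` and a form-preserving ℤ-linear involution `σ`, every
ℤ-linear functional on the odd sublattice `ker (id + σ)` is represented, after
multiplication by 2, by pairing with an odd element. -/
theorem stmt_12 {L : Type*} [AddCommGroup L] [Module ℤ L]
    [Module.Free ℤ L] [Module.Finite ℤ L]
    (B : L →ₗ[ℤ] L →ₗ[ℤ] ℤ)
    (halt : ∀ x : L, B x x = 0)
    (huni : Function.Bijective fun x : L => B x)
    (σ : L →ₗ[ℤ] L) (hσ : ∀ x, σ (σ x) = x)
    (hinv : ∀ x y : L, B (σ x) (σ y) = B x y) :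
    ∀ φ : (LinearMap.ker ((LinearMap.id : L →ₗ[ℤ] L) + σ)) →ₗ[ℤ] ℤ,
      ∃ x : LinearMap.ker ((LinearMap.id : L →ₗ[ℤ] L) + σ),
        ∀ y : LinearMap.ker ((LinearMap.id : L →ₗ[ℤ] L) + σ),
          B (x : L) (y : L) = 2 * φ y := by
  intro φ
  obtain ⟨r, hr⟩ := aux_retraction ((LinearMap.id : L →ₗ[ℤ] L) + σ)
  have hadd : ∀ a b : L, r (a + b) = r a + r b := fun a b => map_add r a b
  let f : L → LinearMap.ker ((LinearMap.id : L →ₗ[ℤ] L) + σ) := fun x => r x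
  let g : L →ₗ[ℤ] LinearMap.ker ((LinearMap.id : L →ₗ[ℤ] L) + σ) := ⟨⟨f, hadd⟩, fun c a =>
    (congrArg r (int_smul_eq_zsmul ‹Module ℤ L› c a)).trans (map_zsmul r.toAddMonoidHom c a)⟩
  obtain ⟨z, hz⟩ := huni.2 (φ.comp g)
  have hzy : ∀ y : LinearMap.ker ((LinearMap.id : L →ₗ[ℤ] L) + σ), B z (y : L) = φ y := by
    intro y
    have h3 := congrArg (· (y : L)) hz
    simp only [LinearMap.comp_apply] at h3
    rw [h3]
    exact congrArg φ (hr y)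
  have hxK : z - σ z ∈ LinearMap.ker ((LinearMap.id : L →ₗ[ℤ] L) + σ) := by
    simp [LinearMap.mem_ker, map_sub, hσ]
    abel
  refine ⟨⟨z - σ z, hxK⟩, fun y => ?_⟩
  have h4 : (y : L) + σ (y : L) = 0 := by
    have := y.2
    rw [LinearMap.mem_ker] at this
    simp only [LinearMap.add_apply, LinearMap.id_apply] at this
    exact this
  have hyσ : σ (y : L) = -(y : L) := (neg_eq_of_add_eq_zero_right h4).symm
  have hsz : B (σ z) (y : L) = - B z (y : L) := by
    have h5 := hinv z (σ (y : L))
    rw [hσ] at h5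
    rw [h5, hyσ, map_neg]
  have h6 : B (z - σ z) (y : L) = 2 * B z (y : L) := by
    rw [map_sub]
    simp only [LinearMap.sub_apply, hsz]
    ring
  rw [show ((⟨z - σ z, hxK⟩ : LinearMap.ker ((LinearMap.id : L →ₗ[ℤ] L) + σ)) : L) = z - σ z from rfl,
    h6, hzy]
end

section
/- Let L be a finitely generated free ℤ-module with a biadditive alternating nondegenerate form ⟨·,·⟩ : L × L → ℤ, let G ⊆ L be an isotropic subgroup (⟨g,g'⟩ = 0 for all g,g' ∈ G), and let K = {x ∈ L : ⟨x,g⟩ = 0 for all g ∈ G}. Then: (i) G ⊆ K; (ii) the form descends to a well-defined biadditive alternating form on the quotient K/G, i.e. ⟨x + g, y + g'⟩ = ⟨x, y⟩ for all x, y ∈ K and g, g' ∈ G; and (iii) the descended form is nondegenerate up to torsion: if x ∈ K satisfies ⟨x,y⟩ = 0 for all y ∈ K, then n·x ∈ G for some integer n ≥ 1. -/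
private lemma rat_clear_den' {ι : Type*} [Fintype ι] (v : ι → ℚ) :
    ∃ d : ℤ, 1 ≤ d ∧ ∀ i, ∃ z : ℤ, (d : ℚ) * v i = z := by
  classical
  refine ⟨∏ i, ((v i).den : ℤ), ?_, ?_⟩
  · have hp : (0:ℤ) < ∏ i, ((v i).den : ℤ) :=
      Finset.prod_pos fun i _ => by exact_mod_cast (v i).pos
    omega
  · intro i
    obtain ⟨k, hk⟩ : ((v i).den : ℤ) ∣ ∏ j, ((v j).den : ℤ) :=
      Finset.dvd_prod_of_mem _ (Finset.mem_univ i)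
    refine ⟨k * (v i).num, ?_⟩
    have hdm : ((v i).den : ℚ) * v i = ((v i).num : ℚ) := by
      exact_mod_cast Rat.den_mul_eq_num (v i)
    rw [hk]
    push_cast
    rw [mul_comm ((v i).den : ℚ) (k : ℚ), mul_assoc, hdm]

/-- lattice symplectic reduction. For a finitely generated free ℤ-module
`L` with biadditive alternating nondegenerate form `B`, an isotropic subgroup `G`, and
`K = {x | ⟨x,g⟩ = 0 ∀ g ∈ G}`: (i) `G ⊆ K`; (ii) the form descends to `K/G`; (iii) the
descended form is nondegenerate up to torsion. -/
theorem stmt_13 {L : Type*} [AddCommGroup L] [Module ℤ L]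
    [Module.Free ℤ L] [Module.Finite ℤ L]
    (B : L → L → ℤ)
    (hBl : ∀ x x' y, B (x + x') y = B x y + B x' y)
    (hBr : ∀ x y y', B x (y + y') = B x y + B x y')
    (halt : ∀ x, B x x = 0)
    (hnd : ∀ x : L, (∀ y : L, B x y = 0) → x = 0)
    (G : Submodule ℤ L)
    (hiso : ∀ g ∈ G, ∀ g' ∈ G, B g g' = 0) :
    (∀ g ∈ G, ∀ g' ∈ G, B g g' = 0) ∧
    (∀ x y : L, (∀ g ∈ G, B x g = 0) → (∀ g ∈ G, B y g = 0) →
      ∀ g ∈ G, ∀ g' ∈ G, B (x + g) (y + g') = B x y) ∧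
    (∀ x : L, (∀ g ∈ G, B x g = 0) →
      (∀ y : L, (∀ g ∈ G, B y g = 0) → B x y = 0) →
      ∃ n : ℤ, 1 ≤ n ∧ n • x ∈ G) := by
  classical
  obtain rfl : ‹Module ℤ L› = AddCommGroup.toIntModule L :=
    (AddCommGroup.uniqueIntModule (M := L)).uniq _
  have hskew : ∀ x y : L, B y x = -B x y := by
    intro x y
    have h := halt (x + y)
    rw [hBl, hBr, hBr, halt, halt] at h
    linarith
  refine ⟨hiso, ?_, ?_⟩
  · intro x y hx hy g hg g' hg'
    rw [hBl, hBr, hBr, hiso g hg g' hg', hx g' hg', hskew y g, hy g hg]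
    ring
  · intro x hxK hxperp
    -- basic consequences of biadditivity
    have hB0l : ∀ y, B 0 y = 0 := by
      intro y; have := hBl 0 0 y; simpa using this
    have hB0r : ∀ a, B a 0 = 0 := by
      intro a; have := hBr a 0 0; simpa using this
    have hBnegl : ∀ a y : L, B (-a) y = -B a y := by
      intro a y
      have := hBl a (-a) y
      simp only [add_neg_cancel, hB0l] at this
      linarith
    have hBnegr : ∀ a y : L, B a (-y) = -B a y := by
      intro a y
      have := hBr a y (-y)
      simp only [add_neg_cancel, hB0r] at this
      linarith
    have hslM : ∀ (n : ℤ) (a y : L), B (n • a) y = n * B a y := by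
      intro n a y
      induction n using Int.induction_on with
      | zero => rw [zero_smul]; simp [hB0l]
      | succ k ih => rw [add_smul, one_smul, hBl, ih]; push_cast; ring
      | pred k ih =>
          rw [sub_smul, one_smul, sub_eq_add_neg, hBl, hBnegl, ih]; push_cast; ring
    have hsrM : ∀ (n : ℤ) (a y : L), B a (n • y) = n * B a y := by
      intro n a y
      induction n using Int.induction_on with
      | zero => rw [zero_smul]; simp [hB0r]
      | succ k ih => rw [add_smul, one_smul, hBr, ih]; push_cast; ring
      | pred k ih =>
          rw [sub_smul, one_smul, sub_eq_add_neg, hBr, hBnegr, ih]; push_cast; ring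
    -- package `B` as a biadditive map
    let F : L →+ L →+ ℤ :=
      AddMonoidHom.mk' (fun a => AddMonoidHom.mk' (B a) (hBr a))
        (by intro a a'; ext yy; exact hBl a a' yy)
    -- choose a basis
    set ι := Module.Free.ChooseBasisIndex ℤ L with hι
    set b : Module.Basis ι ℤ L := Module.Free.chooseBasis ℤ L with hb
    -- expansion of B in the basis
    have expand_l : ∀ a c : L, B a c = ∑ i, b.repr a i * B (b i) c := by
      intro a c
      conv_lhs => rw [← b.sum_repr a]
      calc B (∑ i, b.repr a i • b i) c = (F (∑ i, b.repr a i • b i)) c := rfl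
        _ = ∑ i, (F (b.repr a i • b i)) c := by
              rw [map_sum, AddMonoidHom.finset_sum_apply]
        _ = ∑ i, b.repr a i * B (b i) c :=
              Finset.sum_congr rfl fun i _ => hslM _ _ _
    have expand_r : ∀ a c : L, B a c = ∑ j, b.repr c j * B a (b j) := by
      intro a c
      conv_lhs => rw [← b.sum_repr c]
      calc B a (∑ j, b.repr c j • b j) = (F a) (∑ j, b.repr c j • b j) := rfl
        _ = ∑ j, (F a) (b.repr c j • b j) := map_sum (F a) _ _
        _ = ∑ j, b.repr c j * B a (b j) :=
              Finset.sum_congr rfl fun j _ => hsrM _ _ _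
    have e1 : ∀ a c : L, B a c = ∑ i, ∑ j, b.repr a i * (b.repr c j * B (b i) (b j)) := by
      intro a c
      rw [expand_l a c]
      refine Finset.sum_congr rfl fun i _ => ?_
      rw [expand_r (b i) c, Finset.mul_sum]
    -- the embedding of L into ℚ^ι
    let fl : L →ₗ[ℤ] (ι → ℚ) :=
      { toFun := fun a i => ((b.repr a i : ℤ) : ℚ)
        map_add' := by
          intro a a'; funext i
          simp only [map_add, Finsupp.coe_add, Pi.add_apply, Int.cast_add]
        map_smul' := by
          intro n a; funext i
          simp only [map_smul, Finsupp.smul_apply, smul_eq_mul, RingHom.id_apply,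
            Pi.smul_apply, zsmul_eq_mul]
          push_cast
          ring }
    have hflapp : ∀ (a : L) (i : ι), fl a i = ((b.repr a i : ℤ) : ℚ) := fun _ _ => rfl
    have hfinj : Function.Injective fl := by
      intro a a' h
      have hr : b.repr a = b.repr a' := by
        ext i
        have h2 := congrFun h i
        rw [hflapp, hflapp] at h2
        exact_mod_cast h2
      exact b.repr.injective hr
    have hflmk : ∀ u : ι → ℤ, fl (∑ i, u i • b i) = fun i => ((u i : ℤ) : ℚ) := by
      intro u; funext j
      rw [hflapp]
      norm_cast
      simp [Finsupp.single_apply]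
    have hfl_smul : ∀ (nn : ℤ) (aa : L), fl (nn • aa) = fun i => (nn : ℚ) * fl aa i := by
      intro nn aa; funext i
      rw [hflapp, map_smul, Finsupp.smul_apply, smul_eq_mul, hflapp aa i]
      push_cast
      ring
    -- the bilinear form on ℚ^ι
    let M : Matrix ι ι ℚ := fun i j => ((B (b i) (b j) : ℤ) : ℚ)
    let Bq : (ι → ℚ) →ₗ[ℚ] (ι → ℚ) →ₗ[ℚ] ℚ :=
      LinearMap.mk₂ ℚ (fun v w => ∑ i, ∑ j, v i * (w j * M i j))
        (by
          intro v v' w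
          simp only [Pi.add_apply]
          rw [← Finset.sum_add_distrib]
          refine Finset.sum_congr rfl fun i _ => ?_
          rw [← Finset.sum_add_distrib]
          refine Finset.sum_congr rfl fun j _ => ?_
          ring)
        (by
          intro c v w
          simp only [Pi.smul_apply, smul_eq_mul]
          rw [Finset.mul_sum]
          refine Finset.sum_congr rfl fun i _ => ?_
          rw [Finset.mul_sum]
          refine Finset.sum_congr rfl fun j _ => ?_
          ring)
        (by
          intro v w w'
          simp only [Pi.add_apply]
          rw [← Finset.sum_add_distrib]
          refine Finset.sum_congr rfl fun i _ => ?_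
          rw [← Finset.sum_add_distrib]
          refine Finset.sum_congr rfl fun j _ => ?_
          ring)
        (by
          intro c v w
          simp only [Pi.smul_apply, smul_eq_mul]
          rw [Finset.mul_sum]
          refine Finset.sum_congr rfl fun i _ => ?_
          rw [Finset.mul_sum]
          refine Finset.sum_congr rfl fun j _ => ?_
          ring)
    have hBqapp : ∀ v w : ι → ℚ, Bq v w = ∑ i, ∑ j, v i * (w j * M i j) :=
      fun _ _ => rfl
    -- compatibility
    have hBZ : ∀ a c : L, (B a c : ℚ) = Bq (fl a) (fl c) := by
      intro a c
      rw [hBqapp, e1 a c]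
      push_cast
      rfl
    -- skew-symmetry of Bq
    have hMskew : ∀ i j, M j i = -M i j := by
      intro i j
      show ((B (b j) (b i) : ℤ) : ℚ) = -((B (b i) (b j) : ℤ) : ℚ)
      rw [hskew (b i) (b j)]
      push_cast
      ring
    have hqskew : ∀ v w, Bq w v = -Bq v w := by
      intro v w
      rw [hBqapp, hBqapp, ← Finset.sum_neg_distrib, Finset.sum_comm]
      refine Finset.sum_congr rfl fun i _ => ?_
      rw [← Finset.sum_neg_distrib]
      refine Finset.sum_congr rfl fun j _ => ?_
      rw [hMskew i j]
      ring
    -- nondegeneracy of Bq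
    have hndq : ∀ v, (∀ w, Bq v w = 0) → v = 0 := by
      intro v hv
      obtain ⟨d, hd1, hdu⟩ := rat_clear_den' v
      have hd0 : (d : ℚ) ≠ 0 := Int.cast_ne_zero.mpr (by omega)
      choose u hu using hdu
      set a : L := ∑ i, u i • b i with ha
      have hfa' : fl a = (d : ℚ) • v := by
        rw [ha, hflmk u]; funext i
        rw [Pi.smul_apply, smul_eq_mul, hu i]
      have hBa : ∀ c : L, B a c = 0 := by
        intro c
        have hq : (B a c : ℚ) = 0 := by
          rw [hBZ, hfa', map_smul, LinearMap.smul_apply, hv (fl c), smul_zero]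
        exact_mod_cast hq
      have ha0 : a = 0 := hnd a hBa
      funext i
      have hui : ((u i : ℤ) : ℚ) = 0 := by
        have h3 := congrFun (hflmk u) i
        rw [← ha, ha0, map_zero] at h3
        exact (h3.symm : _)
      have h4 : (d : ℚ) * v i = 0 := by rw [hu i, hui]
      rcases mul_eq_zero.mp h4 with h | h
      · exact absurd h hd0
      · exact h
    have hndq' : ∀ w, (∀ v, Bq v w = 0) → w = 0 := by
      intro w hw
      refine hndq w fun v => ?_
      rw [hqskew, hw v, neg_zero]
    -- the span of the image of G
    set W : Submodule ℚ (ι → ℚ) := Submodule.span ℚ (fl '' (G : Set L)) with hW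
    have hxW : fl x ∈ W := by
      by_contra hxn
      have hπ : (Submodule.Quotient.mk (fl x) : (ι → ℚ) ⧸ W) ≠ 0 := by
        simpa [Submodule.Quotient.mk_eq_zero] using hxn
      obtain ⟨φ₀, hφ₀⟩ : ∃ φ₀ : Module.Dual ℚ ((ι → ℚ) ⧸ W),
          φ₀ (Submodule.Quotient.mk (fl x)) ≠ 0 := by
        by_contra h
        push_neg at h
        exact hπ ((Module.forall_dual_apply_eq_zero_iff ℚ _).mp h)
      set φ : Module.Dual ℚ (ι → ℚ) := φ₀.comp W.mkQ with hφ
      have hφW : ∀ z ∈ W, φ z = 0 := by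
        intro z hz
        have hz0 : W.mkQ z = 0 := (Submodule.Quotient.mk_eq_zero W).mpr hz
        rw [hφ, LinearMap.comp_apply, hz0, map_zero]
      have hφx : φ (fl x) ≠ 0 := hφ₀
      -- represent φ by a vector via Bq
      have hinj : Function.Injective Bq.flip := by
        intro w w' h
        have h0 : ∀ v, Bq v (w - w') = 0 := by
          intro v
          rw [map_sub, sub_eq_zero]
          exact LinearMap.congr_fun h v
        exact sub_eq_zero.mp (hndq' (w - w') h0)
      have hfr : Module.finrank ℚ (ι → ℚ) =
          Module.finrank ℚ (Module.Dual ℚ (ι → ℚ)) := Subspace.dual_finrank_eq.symm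
      have hsurj : Function.Surjective Bq.flip :=
        (LinearMap.injective_iff_surjective_of_finrank_eq_finrank hfr).mp hinj
      obtain ⟨w, hw⟩ := hsurj φ
      have hwv : ∀ v, Bq v w = φ v := fun v => LinearMap.congr_fun hw v
      -- clear denominators of w
      obtain ⟨d, hd1, hdu⟩ := rat_clear_den' w
      have hd0 : (d : ℚ) ≠ 0 := Int.cast_ne_zero.mpr (by omega)
      choose u hu using hdu
      set z₀ : L := ∑ i, u i • b i with hz₀
      have hfz : fl z₀ = (d : ℚ) • w := by
        rw [hz₀, hflmk u]; funext i
        rw [Pi.smul_apply, smul_eq_mul, hu i]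
      have hz₀K : ∀ g ∈ G, B z₀ g = 0 := by
        intro g hg
        have hfg : fl g ∈ W := Submodule.subset_span ⟨g, hg, rfl⟩
        have hq : (B z₀ g : ℚ) = 0 := by
          rw [hBZ, hfz, map_smul, LinearMap.smul_apply, hqskew, hwv, hφW _ hfg,
            neg_zero, smul_zero]
        exact_mod_cast hq
      have hxz : B x z₀ = 0 := hxperp z₀ hz₀K
      have hcon : (d : ℚ) * φ (fl x) = 0 := by
        have h1 : (B x z₀ : ℚ) = (d : ℚ) * φ (fl x) := by
          rw [hBZ, hfz, map_smul, hwv, smul_eq_mul]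
        rw [← h1, hxz, Int.cast_zero]
      rcases mul_eq_zero.mp hcon with h | h
      · exact hd0 h
      · exact hφx h
    -- clear denominators of the span representation
    obtain ⟨n, c, g, hsum⟩ := Submodule.mem_span_set'.mp hxW
    obtain ⟨d, hd1, hdc⟩ := rat_clear_den' c
    choose a ha using hdc
    choose γ hγG hγf using fun i : Fin n => (Set.mem_image _ _ _).mp (g i).2
    refine ⟨d, hd1, ?_⟩
    have key : fl (d • x) = fl (∑ i, a i • γ i) := by
      rw [map_sum, hfl_smul d x]
      have h5 : ∀ i : Fin n, fl (a i • γ i) = (d : ℚ) • (c i • (g i : ι → ℚ)) := by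
        intro i
        rw [hfl_smul (a i) (γ i), hγf i]
        funext j
        rw [Pi.smul_apply, Pi.smul_apply, smul_eq_mul, smul_eq_mul, ← mul_assoc, ha i]
      rw [Finset.sum_congr rfl fun i _ => h5 i, ← Finset.smul_sum, hsum]
      funext j
      rw [Pi.smul_apply, smul_eq_mul]
    have hkey := hfinj key
    rw [hkey]
    exact Submodule.sum_mem _ fun i _ => Submodule.smul_mem _ _ (hγG i)
end
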